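/- arXiv:1310.4867 — 4 statements merged into one kernel-verified Lean document; each statement's English description precedes it below -/
import Mathlib

section
/- Let V be a vertex algebra and (W, Y_W) a V-module. For u, v ∈ V, w ∈ W, p, q ∈ ℤ, let l be a nonnegative integer such that u_n w = 0 for all n ≥ l, and let k be a nonnegative integer with k − q > 0 such that v_n w = 0 for all n ≥ k. Then u_p v_q w = Σ_{i=0}^{k−q−1} Σ_{j=0}^{l} C(p−l, i) C(l, j) (u_{p−l−i+j} v)_{q+l+i−j} w, where C denotes the (generalized) binomial coefficient and u_n = Res_x x^n Y(u,x). -/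
/-!
Put `T m = u_{p-m} v_{q+m} w`; it vanishes for `m ≥ k - q`. Weak associativity, read off at the
coefficient of `x₀^(l-p+i-1) x₂^(-q-i-1)`, expresses `∑_j C(l-p+i-1+j, j) T(i+j)` through the
iterates `(u_{p-i-l+j} v)_{q+i+l-j} w`. The triangular matrices `(C(a, i))` and `(C(i+j-a-1, j))`
are mutually inverse, because Chu–Vandermonde gives `∑_{i ≤ m} C(a, i) C(m-a-1, m-i) = C(m-1, m)`,
which is `1` for `m = 0` and `0` otherwise. So summing against `C(p-l, i)` recovers
`T 0 = u_p v_q w`.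
-/

open scoped BigOperators

/-- Generalized binomial coefficient `C(a, i)` for `a : ℤ`, `i : ℕ`, valued in `ℂ`. -/
noncomputable def gb (a : ℤ) (i : ℕ) : ℂ :=
  (∏ j ∈ Finset.range i, ((a : ℂ) - (j : ℂ))) / (Nat.factorial i : ℂ)

/-- A vertex algebra, presented through the coefficient operators
`coeff u n = u_n = Res_x x^n Y(u,x)` of its vertex operator map, together with the
vacuum, truncation, creation and Borcherds (Jacobi) identity axioms. -/
structure VertexAlgebra (V : Type*) [AddCommGroup V] [Module ℂ V] where
  coeff : V → ℤ → V →ₗ[ℂ] V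
  coeff_add : ∀ (u v : V) (n : ℤ), coeff (u + v) n = coeff u n + coeff v n
  coeff_smul : ∀ (c : ℂ) (u : V) (n : ℤ), coeff (c • u) n = c • coeff u n
  vac : V
  vac_coeff_neg_one : ∀ v : V, coeff vac (-1) v = v
  vac_coeff : ∀ n : ℤ, n ≠ -1 → coeff vac n = 0
  trunc : ∀ u v : V, ∃ N : ℤ, ∀ n ≥ N, coeff u n v = 0
  creation : ∀ (u : V) (n : ℤ), 0 ≤ n → coeff u n vac = 0
  create_neg_one : ∀ u : V, coeff u (-1) vac = u
  borcherds : ∀ (u v w : V) (p q r : ℤ),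
    (∑ᶠ i : ℕ, gb p i • coeff (coeff u (r + i) v) (p + q - i) w) =
    ∑ᶠ i : ℕ, ((-1 : ℂ) ^ i * gb r i) •
      (coeff u (p + r - i) (coeff v (q + i) w)
        - ((-1 : ℂ) ^ r) • coeff v (q + r - i) (coeff u (p + i) w))

/-- A module for a vertex algebra, presented through the coefficient operators
`Yw u n = u_n = Res_x x^n Y_W(u,x)`, with weak associativity (in coefficient form:
for every `a b : ℤ`, the coefficient of `x₀^a x₂^b` in
`(x₀+x₂)^l Y_W(u,x₀+x₂) Y_W(v,x₂) w` equals that in `(x₀+x₂)^l Y_W(Y(u,x₀)v,x₂) w`,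
where `(x₀+x₂)^n` is expanded in nonnegative powers of `x₂`) as the main axiom. -/
structure VAModule {V : Type*} [AddCommGroup V] [Module ℂ V] (A : VertexAlgebra V)
    (W : Type*) [AddCommGroup W] [Module ℂ W] where
  Yw : V → ℤ → W →ₗ[ℂ] W
  Yw_add : ∀ (u v : V) (n : ℤ), Yw (u + v) n = Yw u n + Yw v n
  Yw_smul : ∀ (c : ℂ) (u : V) (n : ℤ), Yw (c • u) n = c • Yw u n
  vac_neg_one : ∀ w : W, Yw A.vac (-1) w = w
  vac_ne : ∀ n : ℤ, n ≠ -1 → Yw A.vac n = 0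
  trunc : ∀ (u : V) (w : W), ∃ N : ℤ, ∀ n ≥ N, Yw u n w = 0
  weak_assoc : ∀ (u v : V) (w : W) (l : ℕ),
    (∀ n : ℤ, (l : ℤ) ≤ n → Yw u n w = 0) →
    ∀ a b : ℤ,
      (∑ᶠ j : ℕ, gb (a + j) j • Yw u ((l : ℤ) - 1 - a - j) (Yw v ((j : ℤ) - b - 1) w)) =
      ∑ j ∈ Finset.range (l + 1),
        gb l j • Yw (A.coeff u ((l : ℤ) - j - a - 1) v) ((j : ℤ) - b - 1) w

open Finset

theorem gb_eq_ringChoose (a : ℤ) (n : ℕ) : gb a n = Ring.choose (a : ℂ) n := by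
  rw [Ring.choose_eq_smul, ← Polynomial.aeval_eq_smeval, Polynomial.aeval_def,
    Polynomial.eval₂_eq_eval_map, descPochhammer_map, descPochhammer_eval_eq_prod_range,
    gb, smul_eq_mul, div_eq_inv_mul]

theorem gb_natCast (n j : ℕ) : gb n j = n.choose j := by
  rw [gb_eq_ringChoose, Int.cast_natCast, Ring.choose_natCast]

theorem gb_add (a b : ℤ) (m : ℕ) :
    gb (a + b) m = ∑ i ∈ range (m + 1), gb a i * gb b (m - i) := by
  rw [gb_eq_ringChoose, Int.cast_add, Ring.add_choose_eq m (Commute.all (a : ℂ) b),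
    Nat.sum_antidiagonal_eq_sum_range_succ_mk]
  simp only [gb_eq_ringChoose]

theorem gb_zero_right (a : ℤ) : gb a 0 = 1 := by simp [gb]

theorem gb_sub_one_self {m : ℕ} (hm : m ≠ 0) : gb (m - 1) m = 0 := by
  rw [gb, prod_eq_zero (mem_range.mpr (Nat.sub_one_lt hm)), zero_div]
  push_cast [Nat.cast_sub (Nat.one_le_iff_ne_zero.mpr hm)]
  ring

theorem sum_range_sum_range_eq_sum_range_diag {M : Type*} [AddCommMonoid M] {N : ℕ}
    (F : ℕ → ℕ → M) (hF : ∀ i j, N ≤ i + j → F i j = 0) :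
    ∑ i ∈ range N, ∑ j ∈ range N, F i j = ∑ m ∈ range N, ∑ i ∈ range (m + 1), F i (m - i) := by
  rw [sum_range_diag_flip]
  refine sum_congr rfl fun i _ => (sum_subset (range_subset_range.2 (Nat.sub_le N i))
    fun j _ hj => hF i j ?_).symm
  rw [mem_range, not_lt] at hj
  omega

theorem sum_gb_smul_sum_gb_smul {M : Type*} [AddCommGroup M] [Module ℂ M] (a : ℤ) {N : ℕ}
    (T : ℕ → M) (hT : ∀ m, N ≤ m → T m = 0) :
    ∑ i ∈ range N, gb a i • ∑ j ∈ range N, gb ((i + j : ℕ) - a - 1) j • T (i + j) = T 0 := by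
  have hdiag : ∀ m, ∑ i ∈ range (m + 1),
      (gb a i * gb ((i + (m - i) : ℕ) - a - 1) (m - i)) • T (i + (m - i)) = gb (m - 1) m • T m := by
    intro m
    rw [show (m : ℤ) - 1 = a + (m - a - 1) by ring, gb_add, sum_smul]
    refine sum_congr rfl fun i hi => ?_
    rw [Nat.add_sub_cancel' (Nat.lt_succ_iff.mp (mem_range.mp hi))]
  simp_rw [smul_sum, smul_smul]
  rw [sum_range_sum_range_eq_sum_range_diag _ fun i j hij => by rw [hT _ hij, smul_zero]]
  simp_rw [hdiag]
  rcases Nat.eq_zero_or_pos N with rfl | hN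
  · simp [hT 0 le_rfl]
  rw [sum_eq_single_of_mem 0 (mem_range.mpr hN) fun m _ hm => by rw [gb_sub_one_self hm, zero_smul]]
  simp [gb_zero_right]

namespace VAModule

variable {V W : Type*} [AddCommGroup V] [Module ℂ V] [AddCommGroup W] [Module ℂ W]
  {A : VertexAlgebra V} (Wm : VAModule A W)

theorem sum_gb_smul_Yw_Yw {u v : V} {w : W} {l : ℕ}
    (hl : ∀ n : ℤ, (l : ℤ) ≤ n → Wm.Yw u n w = 0) (p q : ℤ) {N : ℕ}
    (hN : ∀ n : ℤ, q + N ≤ n → Wm.Yw v n w = 0) :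
    ∑ j ∈ range N, gb (l - p - 1 + j) j • Wm.Yw u (p - j) (Wm.Yw v (q + j) w) =
      ∑ j ∈ range (l + 1), gb l j • Wm.Yw (A.coeff u (p - l + j) v) (q + l - j) w := by
  have h := Wm.weak_assoc u v w l hl (l - p - 1) (-q - 1)
  rw [finsum_eq_sum_of_support_subset (s := range N) _ fun j hj => ?truncation] at h
  case truncation =>
    rw [coe_range, Set.mem_Iio]
    by_contra! hjN
    exact hj (by dsimp only; rw [hN _ (by omega), map_zero, smul_zero])
  convert h using 1
  · refine sum_congr rfl fun j _ => ?_
    rw [show (l : ℤ) - 1 - (l - p - 1) - j = p - j by ring,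
      show (j : ℤ) - (-q - 1) - 1 = q + j by ring]
  · rw [← sum_range_reflect]
    refine sum_congr rfl fun j hj => ?_
    have hjl : j ≤ l := Nat.lt_succ_iff.mp (mem_range.mp hj)
    rw [Nat.add_sub_cancel, gb_natCast, gb_natCast, Nat.choose_symm hjl]
    push_cast [Nat.cast_sub hjl]
    rw [show p - l + (l - j) = (l : ℤ) - j - (l - p - 1) - 1 by ring,
      show q + l - (l - j) = (j : ℤ) - (-q - 1) - 1 by ring]

end VAModule

theorem statement0_general {V W : Type*} [AddCommGroup V] [Module ℂ V]
    [AddCommGroup W] [Module ℂ W] (A : VertexAlgebra V) (Wm : VAModule A W)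
    (u v : V) (w : W) (p q : ℤ) (l k : ℕ)
    (hl : ∀ n : ℤ, (l : ℤ) ≤ n → Wm.Yw u n w = 0)
    (hk : ∀ n : ℤ, (k : ℤ) ≤ n → Wm.Yw v n w = 0) :
    Wm.Yw u p (Wm.Yw v q w) =
      ∑ i ∈ Finset.range ((k : ℤ) - q).toNat, ∑ j ∈ Finset.range (l + 1),
        (gb (p - (l : ℤ)) i * gb (l : ℤ) j) •
          Wm.Yw (A.coeff u (p - (l : ℤ) - i + j) v) (q + (l : ℤ) + i - j) w := by
  set N := ((k : ℤ) - q).toNat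
  have hN : ∀ n : ℤ, q + N ≤ n → Wm.Yw v n w = 0 := fun n hn => hk n (by omega)
  set T : ℕ → W := fun m => Wm.Yw u (p - m) (Wm.Yw v (q + m) w)
  calc Wm.Yw u p (Wm.Yw v q w) = T 0 := by simp [T]
    _ = ∑ i ∈ range N, gb (p - l) i •
          ∑ j ∈ range N, gb ((i + j : ℕ) - (p - l) - 1) j • T (i + j) :=
      (sum_gb_smul_sum_gb_smul _ T fun m hm => by
        simp only [T]; rw [hN _ (by omega), map_zero]).symm
    _ = ∑ i ∈ range N, gb (p - l) i • ∑ j ∈ range (l + 1),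
          gb l j • Wm.Yw (A.coeff u (p - i - l + j) v) (q + i + l - j) w := by
      refine sum_congr rfl fun i _ => ?_
      rw [← Wm.sum_gb_smul_Yw_Yw hl (p - i) (q + i) (N := N) fun n hn => hN n (by omega)]
      refine congrArg _ (sum_congr rfl fun j _ => ?_)
      simp only [T]
      push_cast
      rw [show (i + j : ℤ) - (p - l) - 1 = l - (p - i) - 1 + j by ring, ← sub_sub, ← add_assoc]
    _ = _ := by
      simp only [smul_sum, smul_smul]
      refine sum_congr rfl fun i _ => sum_congr rfl fun j _ => ?_
      rw [sub_right_comm p, add_right_comm q]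

/-- Proposition 2.1: for a module `(W, Y_W)` over a vertex algebra `V`,
if `u_n w = 0` for `n ≥ l` and `v_n w = 0` for `n ≥ k` with `k - q > 0`, then
`u_p v_q w = Σ_{i=0}^{k-q-1} Σ_{j=0}^{l} C(p-l,i) C(l,j) (u_{p-l-i+j} v)_{q+l+i-j} w`. -/
theorem statement0 {V W : Type*} [AddCommGroup V] [Module ℂ V]
    [AddCommGroup W] [Module ℂ W] (A : VertexAlgebra V) (Wm : VAModule A W)
    (u v : V) (w : W) (p q : ℤ) (l k : ℕ)
    (hl : ∀ n : ℤ, (l : ℤ) ≤ n → Wm.Yw u n w = 0)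
    (hk : ∀ n : ℤ, (k : ℤ) ≤ n → Wm.Yw v n w = 0)
    (hkq : q < (k : ℤ)) :
    Wm.Yw u p (Wm.Yw v q w) =
      ∑ i ∈ Finset.range ((k : ℤ) - q).toNat, ∑ j ∈ Finset.range (l + 1),
        (gb (p - (l : ℤ)) i * gb (l : ℤ) j) •
          Wm.Yw (A.coeff u (p - (l : ℤ) - i + j) v) (q + (l : ℤ) + i - j) w :=
  statement0_general A Wm u v w p q l k hl hk
end

section
/- Let V be a vertex algebra and (W, Y_W) a V-module satisfying weak associativity. Let u, v ∈ V, w ∈ W, p, q ∈ ℤ, and let l, k be nonnegative integers such that u_n w = 0 for n ≥ l and v_n w = 0 for n ≥ k. Then for every integer i ≥ k − q, Res_{x_0} Res_{x_2} x_0^{p−l−i} x_2^{q+i} (x_0+x_2)^l Y_W(Y(u,x_0)v, x_2) w = 0. -/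
open scoped BigOperators

/-!
Weak associativity identifies the coefficients of `(x₀+x₂)^l Y_W(Y(u,x₀)v,x₂) w` with those of
`(x₀+x₂)^l Y_W(u,x₀+x₂) Y_W(v,x₂) w`. In the latter every term contains some `v_n w` with
`n ≥ q + i ≥ k`, which vanishes, so the residue in question is zero.
-/

namespace VAModule

variable {V W : Type*} [AddCommGroup V] [Module ℂ V] [AddCommGroup W] [Module ℂ W]
  {A : VertexAlgebra V} (Wm : VAModule A W)

theorem sum_gb_Yw_coeff_eq_zero (u v : V) (w : W) (l k : ℕ)
    (hl : ∀ n : ℤ, (l : ℤ) ≤ n → Wm.Yw u n w = 0)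
    (hk : ∀ n : ℤ, (k : ℤ) ≤ n → Wm.Yw v n w = 0)
    (m n : ℤ) (hn : (k : ℤ) ≤ n) :
    ∑ j ∈ Finset.range (l + 1), gb l j • Wm.Yw (A.coeff u (m - j) v) (n + j) w = 0 := by
  have h := Wm.weak_assoc u v w l hl ((l : ℤ) - 1 - m) (-n - 1)
  rw [finsum_eq_zero_of_forall_eq_zero fun j => by rw [hk _ (by omega), map_zero, smul_zero]]
    at h
  refine (Finset.sum_congr rfl fun j _ => ?_).trans h.symm
  rw [show m - (j : ℤ) = l - j - (l - 1 - m) - 1 by omega,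
    show n + (j : ℤ) = j - (-n - 1) - 1 by omega]

end VAModule

/-- for a module `(W, Y_W)` over a vertex algebra satisfying weak
associativity, with `u_n w = 0` for `n ≥ l` and `v_n w = 0` for `n ≥ k`, for every
integer `i ≥ k - q` one has
`Res_{x₀} Res_{x₂} x₀^{p-l-i} x₂^{q+i} (x₀+x₂)^l Y_W(Y(u,x₀)v, x₂) w = 0`; in
component form, `Σ_{j=0}^{l} C(l,j) (u_{p-i-j} v)_{q+i+j} w = 0`. -/
theorem statement3 {V W : Type*} [AddCommGroup V] [Module ℂ V]
    [AddCommGroup W] [Module ℂ W] (A : VertexAlgebra V) (Wm : VAModule A W)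
    (u v : V) (w : W) (p q : ℤ) (l k : ℕ)
    (hl : ∀ n : ℤ, (l : ℤ) ≤ n → Wm.Yw u n w = 0)
    (hk : ∀ n : ℤ, (k : ℤ) ≤ n → Wm.Yw v n w = 0)
    (i : ℤ) (hi : (k : ℤ) - q ≤ i) :
    ∑ j ∈ Finset.range (l + 1),
      gb (l : ℤ) j • Wm.Yw (A.coeff u (p - i - j) v) (q + i + j) w = 0 :=
  Wm.sum_gb_Yw_coeff_eq_zero u v w l k hl hk (p - i) (q + i) (by omega)
end

section
/- Let V be an ℕ-graded vertex algebra and (W, Y_W) an ℕ-gradable weak V-module with homogeneous u, v ∈ V and homogeneous w ∈ W. Set K = p + q + 2 − wt u − wt v. Then for every integer m ≤ K − 2 deg w − 2, Σ_{j=0}^{wt u + deg w} C(wt u + deg w, j) (u_{j+m} v)_{K + wt u + wt v − j − m − 2} w = 0. -/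
open scoped BigOperators

/-- A ℤ-graded vertex algebra: a vertex algebra with an internal direct sum
decomposition `V = ⨁_{n∈ℤ} V_(n)` compatible with the vertex operator coefficients:
`u_n` maps `V_(k)` to `V_(k + m - n - 1)` for `u ∈ V_(m)`. -/
structure GradedVA (V : Type*) [AddCommGroup V] [Module ℂ V] extends VertexAlgebra V where
  gr : ℤ → Submodule ℂ V
  internal : DirectSum.IsInternal gr
  vac_mem : vac ∈ gr 0
  coeff_grade : ∀ {m : ℤ} {u : V}, u ∈ gr m → ∀ (n : ℤ) {k : ℤ} {v : V}, v ∈ gr k →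
    coeff u n v ∈ gr (k + m - n - 1)

/-- An ℕ-graded vertex algebra: `V_(n) = 0` for `n < 0`. -/
def GradedVA.IsNNGraded {V : Type*} [AddCommGroup V] [Module ℂ V] (A : GradedVA V) : Prop :=
  ∀ n : ℤ, n < 0 → A.gr n = ⊥

/-- The property that a family of coefficient operators `Yw u n = u_n` defines a weak
module structure over the vertex algebra `A` on `W`: linearity in `u`, lower
truncation, the vacuum property `Y_W(1,x) = id`, and the Borcherds (Jacobi) identity. -/
def IsWeakModule {V W : Type*} [AddCommGroup V] [Module ℂ V] [AddCommGroup W] [Module ℂ W]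
    (A : VertexAlgebra V) (Yw : V → ℤ → W →ₗ[ℂ] W) : Prop :=
  (∀ (u v : V) (n : ℤ), Yw (u + v) n = Yw u n + Yw v n) ∧
  (∀ (c : ℂ) (u : V) (n : ℤ), Yw (c • u) n = c • Yw u n) ∧
  (∀ (u : V) (w : W), ∃ N : ℤ, ∀ n ≥ N, Yw u n w = 0) ∧
  (∀ w : W, Yw A.vac (-1) w = w) ∧
  (∀ n : ℤ, n ≠ -1 → Yw A.vac n = 0) ∧
  (∀ (u v : V) (w : W) (p q r : ℤ),
    (∑ᶠ i : ℕ, gb p i • Yw (A.coeff u (r + i) v) (p + q - i) w) =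
    ∑ᶠ i : ℕ, ((-1 : ℂ) ^ i * gb r i) •
      (Yw u (p + r - i) (Yw v (q + i) w)
        - ((-1 : ℂ) ^ r) • Yw v (q + r - i) (Yw u (p + i) w)))

/-- An ℕ-grading on a weak module: an internal direct sum `W = ⨁ W_(n)` with
`W_(n) = 0` for `n < 0` and `u_n : W_(k) → W_(k + m - n - 1)` for `u ∈ V_(m)`. -/
def IsNNGradedModule {V W : Type*} [AddCommGroup V] [Module ℂ V] [AddCommGroup W]
    [Module ℂ W] (A : GradedVA V) (Yw : V → ℤ → W →ₗ[ℂ] W)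
    (wgr : ℤ → Submodule ℂ W) : Prop :=
  DirectSum.IsInternal wgr ∧ (∀ n : ℤ, n < 0 → wgr n = ⊥) ∧
  (∀ {m : ℤ} {u : V}, u ∈ A.gr m → ∀ (n : ℤ) {k : ℤ} {w : W}, w ∈ wgr k →
    Yw u n w ∈ wgr (k + m - n - 1))

/- Apply the Jacobi identity with `p = wt u + deg w` and `r = m`: its left-hand side is the
claimed sum, since `C(wt u + deg w, j)` vanishes for `j > wt u + deg w`. Every term on the
right-hand side contains `v_{q+i} w` or `u_{wt u + deg w + i} w`, whose degree is negative once
`m ≤ K - 2 deg w - 2`, so it vanishes because `W` is ℕ-graded. -/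

theorem gb_natCast_eq_zero {n i : ℕ} (h : n < i) : gb n i = 0 := by
  rw [gb, Finset.prod_eq_zero (Finset.mem_range.mpr h) (by simp), zero_div]

theorem finsum_gb_natCast_smul {M : Type*} [AddCommGroup M] [Module ℂ M] (n : ℕ) (f : ℕ → M) :
    ∑ᶠ i : ℕ, gb n i • f i = ∑ i ∈ Finset.range (n + 1), gb n i • f i := by
  refine finsum_eq_sum_of_support_subset _ fun i hi => ?_
  by_contra hi'
  simp only [Finset.coe_range, Set.mem_Iio, not_lt] at hi'
  exact hi (by simp only [gb_natCast_eq_zero (show n < i by omega), zero_smul])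

section

variable {V W : Type*} [AddCommGroup V] [Module ℂ V] [AddCommGroup W] [Module ℂ W]

theorem IsNNGradedModule.apply_eq_zero_of_neg {A : GradedVA V} {Yw : V → ℤ → W →ₗ[ℂ] W}
    {wgr : ℤ → Submodule ℂ W} (hWgr : IsNNGradedModule A Yw wgr) {k d : ℤ} {x : V} {w : W}
    (hx : x ∈ A.gr k) (hw : w ∈ wgr d) {n : ℤ} (hn : d + k - n - 1 < 0) : Yw x n w = 0 := by
  obtain ⟨-, hneg, hgrade⟩ := hWgr
  simpa [hneg _ hn] using hgrade hx n hw

theorem IsWeakModule.finsum_gb_smul_eq_zero {A : VertexAlgebra V} {Yw : V → ℤ → W →ₗ[ℂ] W}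
    (hW : IsWeakModule A Yw) {u v : V} {w : W} {p q : ℤ} (r : ℤ)
    (hv : ∀ i : ℕ, Yw v (q + i) w = 0) (hu : ∀ i : ℕ, Yw u (p + i) w = 0) :
    ∑ᶠ i : ℕ, gb p i • Yw (A.coeff u (r + i) v) (p + q - i) w = 0 := by
  obtain ⟨-, -, -, -, -, hJacobi⟩ := hW
  rw [hJacobi u v w p q r]
  simp [hv, hu]

end

theorem statement6_general {V W : Type*} [AddCommGroup V] [Module ℂ V]
    [AddCommGroup W] [Module ℂ W] (A : GradedVA V)
    (Yw : V → ℤ → W →ₗ[ℂ] W) (wgr : ℤ → Submodule ℂ W)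
    (hW : IsWeakModule A.toVertexAlgebra Yw)
    (hWgr : IsNNGradedModule A Yw wgr)
    (wu wv dw : ℕ) (u v : V) (w : W)
    (hu : u ∈ A.gr (wu : ℤ)) (hv : v ∈ A.gr (wv : ℤ)) (hw : w ∈ wgr (dw : ℤ))
    (p q : ℤ) :
    ∀ m : ℤ, m ≤ (p + q + 2 - (wu : ℤ) - (wv : ℤ)) - 2 * (dw : ℤ) - 2 →
      ∑ j ∈ Finset.range (wu + dw + 1),
        gb ((wu : ℤ) + (dw : ℤ)) j •
          Yw (A.coeff u ((j : ℤ) + m) v)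
            ((p + q + 2 - (wu : ℤ) - (wv : ℤ)) + (wu : ℤ) + (wv : ℤ) - j - m - 2) w = 0 := by
  intro m hm
  have hJacobi := hW.finsum_gb_smul_eq_zero (p := ((wu + dw : ℕ) : ℤ))
    (q := p + q - m - wu - dw) m
    (fun i => hWgr.apply_eq_zero_of_neg hv hw (by omega))
    (fun i => hWgr.apply_eq_zero_of_neg hu hw (by omega))
  rw [finsum_gb_natCast_smul] at hJacobi
  push_cast at hJacobi
  rw [← hJacobi]
  refine Finset.sum_congr rfl fun j _ => ?_
  rw [add_comm (j : ℤ) m]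
  congr 3
  ring

/-- Remark 2.5, component form: let `V` be an ℕ-graded vertex algebra and
`(W, Y_W)` an ℕ-gradable weak `V`-module, `u ∈ V_(wu)`, `v ∈ V_(wv)` homogeneous and
`w ∈ W_(dw)` homogeneous. With `K = p + q + 2 - wu - wv`, for every integer
`m ≤ K - 2 dw - 2`,
`Σ_{j=0}^{wu+dw} C(wu+dw, j) (u_{j+m} v)_{K + wu + wv - j - m - 2} w = 0`. -/
theorem statement6 {V W : Type*} [AddCommGroup V] [Module ℂ V]
    [AddCommGroup W] [Module ℂ W] (A : GradedVA V) (hA : A.IsNNGraded)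
    (Yw : V → ℤ → W →ₗ[ℂ] W) (wgr : ℤ → Submodule ℂ W)
    (hW : IsWeakModule A.toVertexAlgebra Yw)
    (hWgr : IsNNGradedModule A Yw wgr)
    (wu wv dw : ℕ) (u v : V) (w : W)
    (hu : u ∈ A.gr (wu : ℤ)) (hv : v ∈ A.gr (wv : ℤ)) (hw : w ∈ wgr (dw : ℤ))
    (p q : ℤ) :
    ∀ m : ℤ, m ≤ (p + q + 2 - (wu : ℤ) - (wv : ℤ)) - 2 * (dw : ℤ) - 2 →
      ∑ j ∈ Finset.range (wu + dw + 1),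
        gb ((wu : ℤ) + (dw : ℤ)) j •
          Yw (A.coeff u ((j : ℤ) + m) v)
            ((p + q + 2 - (wu : ℤ) - (wv : ℤ)) + (wu : ℤ) + (wv : ℤ) - j - m - 2) w = 0 :=
  statement6_general A Yw wgr hW hWgr wu wv dw u v w hu hv hw p q
end

section
/- For integers K, N with N ≥ 0, let q_2(y_0, y_2) = Σ_{i=0}^{N} C(N−1, i) y_0^{N−1−i} y_2^{i}. Then q_2(y y_2, y_2) = y_2^{N−1} q_2(y, 1) as formal Laurent polynomials, and for any integer n ≤ −N−2, the largest power of y appearing in (−y + x_1)^n q_2(y, 1) (y+1)^{−N−1−n} (expanded as a formal power series in x_1 with Laurent coefficients in y, and (y+1)^{−N−1−n} expanded in nonnegative powers of y) is at most −2. -/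
/-!
Part (1) is the homogeneity of `q₂`: all its monomials have total degree `N - 1`.
Part (2) is degree counting: the monomial of `(-y + x₁)^n q₂(y, 1) (y + 1)^{-N-1-n}` indexed by
`(j, i, s)` has `y`-exponent `(n - j) + (N - 1 - i) + s`, and `s ≤ -N - 1 - n` because the last
factor is a polynomial of that degree; so the exponent is at most `-2 - i - j`.
-/

open scoped BigOperators

theorem Finset.sum_ite_and_eq_boole_mul {ι R : Type*} [NonAssocSemiring R] (s : Finset ι)
    (p : ι → Prop) [DecidablePred p] (q : Prop) [Decidable q] (f : ι → R) :
    (∑ i ∈ s, if p i ∧ q then f i else 0) =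
      (if q then 1 else 0) * ∑ i ∈ s, if p i then f i else 0 := by
  simp only [Finset.mul_sum, boole_mul, ← ite_and, and_comm]

theorem y_exponent_le {N : ℕ} {n : ℤ} (hn : n ≤ -(N : ℤ) - 1) (i j : ℕ) {s : ℕ}
    (hs : s ∈ Finset.range ((-(N : ℤ) - 1 - n).toNat + 1)) :
    (n - j) + ((N : ℤ) - 1 - i) + s ≤ -2 - i - j := by
  rw [Finset.mem_range] at hs
  omega

theorem statement15_general (N : ℕ) :
    -- (1) `q₂(y y₂, y₂) = y₂^{N-1} q₂(y, 1)` coefficientwise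
    (∀ a b : ℤ,
      (∑ i ∈ Finset.range (N + 1),
        if a = (N : ℤ) - 1 - i ∧ b = (N : ℤ) - 1 then gb ((N : ℤ) - 1) i else 0) =
      (if b = (N : ℤ) - 1 then (1 : ℂ) else 0) *
        ∑ i ∈ Finset.range (N + 1),
          if a = (N : ℤ) - 1 - i then gb ((N : ℤ) - 1) i else 0) ∧
    -- (2) the coefficient of `y^a x₁^j` in `(-y+x₁)^n q₂(y,1) (y+1)^{-N-1-n}`
    -- vanishes whenever `a ≥ -1`
    (∀ n : ℤ, n ≤ -(N : ℤ) - 2 → ∀ a : ℤ, -1 ≤ a → ∀ j : ℕ,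
      (∑ i ∈ Finset.range (N + 1), ∑ s ∈ Finset.range ((-(N : ℤ) - 1 - n).toNat + 1),
        if (n - (j : ℤ)) + ((N : ℤ) - 1 - i) + (s : ℤ) = a then
          gb n j * (-1 : ℂ) ^ (n - (j : ℤ)) * gb ((N : ℤ) - 1) i * gb (-(N : ℤ) - 1 - n) s
        else 0) = 0) := by
  refine ⟨fun a b => Finset.sum_ite_and_eq_boole_mul _ _ _ _, fun n hn a ha j => ?_⟩
  refine Finset.sum_eq_zero fun i _ => Finset.sum_eq_zero fun s hs => if_neg ?_
  have := y_exponent_le (by omega) i j hs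
  omega

/-- for `N ≥ 0` let `q₂(y₀,y₂) = Σ_{i=0}^{N} C(N-1,i) y₀^{N-1-i} y₂^i`.
Then (1) `q₂(y y₂, y₂) = y₂^{N-1} q₂(y,1)` (as an identity of coefficient functions
in the variables `y, y₂`), and (2) for any integer `n ≤ -N-2`, every coefficient of
`y^a x₁^j` with `a ≥ -1` in the expansion of `(-y+x₁)^n q₂(y,1) (y+1)^{-N-1-n}`
(with `(-y+x₁)^n` expanded in nonnegative powers of `x₁` and `(y+1)^{-N-1-n}` a
polynomial in `y`) vanishes, i.e. the largest power of `y` occurring is at most `-2`. -/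
theorem statement15 (K : ℤ) (N : ℕ) :
    -- (1) `q₂(y y₂, y₂) = y₂^{N-1} q₂(y, 1)` coefficientwise
    (∀ a b : ℤ,
      (∑ i ∈ Finset.range (N + 1),
        if a = (N : ℤ) - 1 - i ∧ b = (N : ℤ) - 1 then gb ((N : ℤ) - 1) i else 0) =
      (if b = (N : ℤ) - 1 then (1 : ℂ) else 0) *
        ∑ i ∈ Finset.range (N + 1),
          if a = (N : ℤ) - 1 - i then gb ((N : ℤ) - 1) i else 0) ∧
    -- (2) the coefficient of `y^a x₁^j` in `(-y+x₁)^n q₂(y,1) (y+1)^{-N-1-n}`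
    -- vanishes whenever `a ≥ -1`
    (∀ n : ℤ, n ≤ -(N : ℤ) - 2 → ∀ a : ℤ, -1 ≤ a → ∀ j : ℕ,
      (∑ i ∈ Finset.range (N + 1), ∑ s ∈ Finset.range ((-(N : ℤ) - 1 - n).toNat + 1),
        if (n - (j : ℤ)) + ((N : ℤ) - 1 - i) + (s : ℤ) = a then
          gb n j * (-1 : ℂ) ^ (n - (j : ℤ)) * gb ((N : ℤ) - 1) i * gb (-(N : ℤ) - 1 - n) s
        else 0) = 0) :=
  statement15_general N
end
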